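/- arXiv:2309.00392 — 6 statements merged into one kernel-verified Lean document; each statement's English description precedes it below -/
import Mathlib

section
/- Let Σ₀ ⊆ Σ contain 0 and exactly one representative of each coset of F(Γ) met by Σ. Then every nonzero g ∈ Γ with representation g = a_0 + F(a_1) + ... + F^n(a_n), a_i ∈ Σ, admits another representation g = F^m(b_m) + ... + F^n(b_n) + F^{n+1}(b) + F^{n+2}(b'), where m is the least index with a_m ≠ 0, b_m ∈ Σ₀ \ {0}, b_i ∈ Σ₀ for m ≤ i ≤ n, and b, b' ∈ Σ. -/
open Function

variable {Γ : Type*}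

/-- Evaluation of a word: `[a₀,…,aₙ] ↦ a₀ + F(a₁) + … + Fⁿ(aₙ)`. -/
def evalF [AddCommGroup Γ] (F : Γ →+ Γ) : List Γ → Γ
  | [] => 0
  | a :: s => a + F (evalF F s)

/-- `S` is an `F`-spanning set for `Γ` (a finite symmetric subset containing `0`
satisfying (C1)–(C3)). -/
structure IsSpanning [AddCommGroup Γ] (F : Γ →+ Γ) (S : Set Γ) : Prop where
  finite : S.Finite
  zero_mem : (0 : Γ) ∈ S
  neg_mem : ∀ a ∈ S, -a ∈ S
  C1 : ∀ g : Γ, ∃ σ : List Γ, (∀ a ∈ σ, a ∈ S) ∧ evalF F σ = g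
  C2 : ∀ a₁ ∈ S, ∀ a₂ ∈ S, ∀ a₃ ∈ S, ∃ b ∈ S, ∃ c ∈ S, a₁ + a₂ + a₃ = b + F c
  C3 : ∀ a₁ ∈ S, ∀ a₂ ∈ S, ∀ b : Γ, a₁ + a₂ = F b → b ∈ S

section Defs

variable [AddCommGroup Γ] (F : Γ →+ Γ) (S S₀ : Set Γ)

/-- `I_F = {Fⁿ(a) : a ∈ Σ \ {0}, n ∈ ℕ}`. -/
def IFset : Set Γ := {x | ∃ a ∈ S, a ≠ 0 ∧ ∃ n : ℕ, x = (⇑F)^[n] a}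

/-- `I_{F,a} = {Fⁿ(a) : n ∈ ℕ}`. -/
def IFa (a : Γ) : Set Γ := {x | ∃ n : ℕ, x = (⇑F)^[n] a}

/-- The preorder `⪯` on `I_F`: `Fⁱ(a) ⪯ Fʲ(b)` iff `i ≤ j`. -/
def preleq (x y : Γ) : Prop :=
  ∃ a ∈ S, a ≠ 0 ∧ ∃ b ∈ S, b ≠ 0 ∧ ∃ i j : ℕ, i ≤ j ∧ x = (⇑F)^[i] a ∧ y = (⇑F)^[j] b

/-- The strict order `≺` on `I_F`: `Fⁱ(a) ≺ Fʲ(b)` iff `i < j`. -/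
def prelt (x y : Γ) : Prop :=
  ∃ a ∈ S, a ≠ 0 ∧ ∃ b ∈ S, b ≠ 0 ∧ ∃ i j : ℕ, i < j ∧ x = (⇑F)^[i] a ∧ y = (⇑F)^[j] b

/-- `g` has a canonical representation `g = Σ_{i=m}^n Fⁱ(bᵢ)` with `b_m ∈ Σ₀ \ {0}`,
`bᵢ ∈ Σ₀`, and lowest exponent `m`. -/
def IsCanonRep (g : Γ) (m : ℕ) : Prop :=
  ∃ n, m ≤ n ∧ ∃ b : ℕ → Γ, b m ∈ S₀ ∧ b m ≠ 0 ∧ (∀ i, m ≤ i → i ≤ n → b i ∈ S₀) ∧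
    g = ∑ i ∈ Finset.Icc m n, (⇑F)^[i] (b i)

/-- `u ≺ V_F(g)` (with the convention `I_F ≺ 0 = V_F(0)`). -/
def ltVF (u g : Γ) : Prop :=
  g = 0 ∨ ∃ k m : ℕ, k < m ∧ (∃ a ∈ S, a ≠ 0 ∧ u = (⇑F)^[k] a) ∧ IsCanonRep F S₀ g m

/-- `V_F(g) ⪯ c`. -/
def leVF (g c : Γ) : Prop :=
  ∃ m k : ℕ, m ≤ k ∧ IsCanonRep F S₀ g m ∧ ∃ a ∈ S, a ≠ 0 ∧ c = (⇑F)^[k] a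

/-- `R(g, u)`: `u = Fⁿ(a)` with `a ∈ Σ \ {0}` and `g = Σ_{i=m}^n Fⁱ(aᵢ)` with `aᵢ ∈ Σ`,
`a_m ≠ 0`, `a_n = a` (some word representing `g` has rightmost letter `a` at position `n`). -/
def Rrel (g u : Γ) : Prop :=
  ∃ a ∈ S, a ≠ 0 ∧ ∃ n : ℕ, u = (⇑F)^[n] a ∧ ∃ m, m ≤ n ∧ ∃ c : ℕ → Γ,
    (∀ i, m ≤ i → i ≤ n → c i ∈ S) ∧ c m ≠ 0 ∧ c n = a ∧
    g = ∑ i ∈ Finset.Icc m n, (⇑F)^[i] (c i)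

/-- `ε_F(u, g)`: `u ∈ I_F` and (`g = u` or `∃h (R(h,u) ∧ u ≺ V_F(g − h))`). -/
def epsF (u g : Γ) : Prop :=
  u ∈ IFset F S ∧ (g = u ∨ ∃ h : Γ, Rrel F S h u ∧ ltVF F S S₀ u (g - h))

-- The truncation function `f(g, u)`.
open Classical in
noncomputable def trunc (g u : Γ) : Γ :=
  if h : ∃ h' : Γ, (∃ u', preleq F S u' u ∧ Rrel F S h' u') ∧ ltVF F S S₀ u (g - h')
  then h.choose else 0

end Defs

private lemma split_lemma [AddCommGroup Γ] (F : Γ →+ Γ) {S S₀ : Set Γ} (hS : IsSpanning F S)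
    (hSF : S ∩ Set.range F ⊆ {0}) (hsub : S₀ ⊆ S)
    (hrep : ∀ a ∈ S, ∃! a₀, a₀ ∈ S₀ ∧ a - a₀ ∈ Set.range F)
    {a : Γ} (ha : a ∈ S) :
    ∃ b t : Γ, b ∈ S₀ ∧ t ∈ S ∧ a = b + F t ∧ (a ≠ 0 → b ≠ 0) := by
  obtain ⟨b, ⟨hb, t, ht⟩, -⟩ := hrep a ha
  refine ⟨b, t, hb, ?_, ?_, ?_⟩
  · exact hS.C3 a ha (-b) (hS.neg_mem b (hsub hb)) t (by rw [ht]; abel)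
  · rw [ht]; abel
  · intro hane hb0
    subst hb0
    have : a ∈ ({0} : Set Γ) := hSF ⟨ha, t, by rw [ht]; abel⟩
    exact hane this

private lemma key_lemma [AddCommGroup Γ] (F : Γ →+ Γ) {S S₀ : Set Γ} (hS : IsSpanning F S)
    (hSF : S ∩ Set.range F ⊆ {0}) (hsub : S₀ ⊆ S)
    (hrep : ∀ a ∈ S, ∃! a₀, a₀ ∈ S₀ ∧ a - a₀ ∈ Set.range F) :
    ∀ k n m (a : ℕ → Γ), n = m + k → (∀ i, m ≤ i → i ≤ n → a i ∈ S) → a m ≠ 0 →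
    ∃ b : ℕ → Γ, ∃ u v : Γ, b m ∈ S₀ ∧ b m ≠ 0 ∧ (∀ i, m ≤ i → i ≤ n → b i ∈ S₀) ∧
      u ∈ S ∧ v ∈ S ∧
      ∑ i ∈ Finset.Icc m n, (⇑F)^[i] (a i)
        = (∑ i ∈ Finset.Icc m n, (⇑F)^[i] (b i)) + (⇑F)^[n + 1] (u + v) := by
  intro k
  induction k with
  | zero =>
    intro n m a hn ha ham
    obtain rfl : m = n := by omega
    obtain ⟨b, t, hb, ht, heq, hbne⟩ :=
      split_lemma F hS hSF hsub hrep (ha m le_rfl le_rfl)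
    refine ⟨fun _ => b, t, 0, hb, hbne ham, fun i _ _ => hb, ht, hS.zero_mem, ?_⟩
    simp only [Nat.add_zero, Finset.Icc_self, Finset.sum_singleton, add_zero]
    rw [heq, iterate_map_add, Function.iterate_succ_apply]
  | succ k ih =>
    intro n m a hn ha ham
    subst hn
    obtain ⟨b, u, v, hbm, hbmne, hb, hu, hv, heq⟩ :=
      ih (m + k) m a rfl (fun i h1 h2 => ha i h1 (by omega)) ham
    have han : a (m + k + 1) ∈ S := ha _ (by omega) le_rfl
    obtain ⟨p, hp, q, hq, hpq⟩ := hS.C2 u hu v hv (a (m + k + 1)) han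
    obtain ⟨b', t, hb', ht, heq', -⟩ := split_lemma F hS hSF hsub hrep hp
    refine ⟨Function.update b (m + k + 1) b', t, q, ?_, ?_, ?_, ht, hq, ?_⟩
    · rwa [Function.update_of_ne (by omega)]
    · rwa [Function.update_of_ne (by omega)]
    · intro i h1 h2
      rcases eq_or_ne i (m + k + 1) with rfl | h
      · rw [Function.update_self]; exact hb'
      · rw [Function.update_of_ne h]; exact hb i h1 (by omega)
    · have hnn : m + (k + 1) = m + k + 1 := rfl
      rw [hnn, Finset.sum_Icc_succ_top (by omega : m ≤ m + k + 1),
        Finset.sum_Icc_succ_top (by omega : m ≤ m + k + 1), heq]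
      have hsum : ∀ j ∈ Finset.Icc m (m + k),
          (⇑F)^[j] (Function.update b (m + k + 1) b' j) = (⇑F)^[j] (b j) := by
        intro j hj
        rw [Function.update_of_ne (by simp at hj; omega)]
      rw [Finset.sum_congr rfl hsum, Function.update_self]
      have key : (⇑F)^[m + k + 1] (u + v)
          = (⇑F)^[m + k + 1] b' + (⇑F)^[m + k + 1 + 1] (t + q)
            - (⇑F)^[m + k + 1] (a (m + k + 1)) := by
        have h1 : u + v = b' + F (t + q) - a (m + k + 1) := by
          rw [heq'] at hpq
          rw [map_add, eq_sub_iff_add_eq, hpq]; abel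
        rw [h1]
        simp only [iterate_map_sub, iterate_map_add]
        rw [← Function.iterate_succ_apply (⇑F) (m + k + 1) (t + q),
          iterate_map_add]
      rw [key]
      abel

/-- Normal-form lemma: every nonzero `g = a₀ + F(a₁) + … + Fⁿ(aₙ)` admits a representation
`g = Fᵐ(b_m) + … + Fⁿ(b_n) + Fⁿ⁺¹(b) + Fⁿ⁺²(b')` with `b_m ∈ Σ₀ \ {0}`, `bᵢ ∈ Σ₀`,
`b, b' ∈ Σ`, `m` the least index with `a_m ≠ 0`. -/
theorem statement1 [AddCommGroup Γ] (F : Γ →+ Γ) (hF : Function.Injective F)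
    (S S₀ : Set Γ) (hS : IsSpanning F S) (hSF : S ∩ Set.range F ⊆ {0})
    (hsub : S₀ ⊆ S) (h0 : (0 : Γ) ∈ S₀)
    (hrep : ∀ a ∈ S, ∃! a₀, a₀ ∈ S₀ ∧ a - a₀ ∈ Set.range F)
    (g : Γ) (hg : g ≠ 0) (n m : ℕ) (a : ℕ → Γ) (ha : ∀ i ≤ n, a i ∈ S)
    (hgrep : g = ∑ i ∈ Finset.range (n + 1), (⇑F)^[i] (a i))
    (hm : m ≤ n) (ham : a m ≠ 0) (hmin : ∀ i < m, a i = 0) :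
    ∃ b : ℕ → Γ, ∃ c c' : Γ,
      b m ∈ S₀ ∧ b m ≠ 0 ∧ (∀ i, m ≤ i → i ≤ n → b i ∈ S₀) ∧ c ∈ S ∧ c' ∈ S ∧
      g = (∑ i ∈ Finset.Icc m n, (⇑F)^[i] (b i)) + (⇑F)^[n + 1] c + (⇑F)^[n + 2] c' := by
  have hg2 : g = ∑ i ∈ Finset.Icc m n, (⇑F)^[i] (a i) := by
    rw [hgrep]
    refine (Finset.sum_subset ?_ ?_).symm
    · intro i hi
      simp only [Finset.mem_Icc] at hi
      simp only [Finset.mem_range]; omega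
    · intro i hi hni
      simp only [Finset.mem_range] at hi
      simp only [Finset.mem_Icc] at hni
      rw [hmin i (by omega), iterate_map_zero]
  obtain ⟨b, u, v, hbm, hbmne, hb, hu, hv, heq⟩ :=
    key_lemma F hS hSF hsub hrep (n - m) n m a (by omega)
      (fun i h1 h2 => ha i h2) ham
  obtain ⟨c, hc, c', hc', hcc⟩ := hS.C2 u hu v hv 0 hS.zero_mem
  refine ⟨b, c, c', hbm, hbmne, hb, hc, hc', ?_⟩
  rw [hg2, heq]
  have huv : u + v = c + F c' := by rw [← hcc]; abel
  have h2 : (⇑F)^[n + 1] (F c') = (⇑F)^[n + 2] c' :=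
    (Function.iterate_succ_apply (⇑F) (n + 1) c').symm
  rw [huv, iterate_map_add, h2]
  abel
end

section
/- Under the assumption Σ ∩ F(Γ) = {0} and F injective, one cannot have F^n(a) = F^m(b) + F^k(c) with a, b, c ∈ Σ \ {0}, m < k, and m ≠ n. -/
open Function

variable {Γ : Type*}

/-- If `Σ ∩ F(Γ) = {0}` and `F` is injective, one cannot have `Fⁿ(a) = Fᵐ(b) + Fᵏ(c)`
with `a, b, c ∈ Σ \ {0}`, `m < k` and `m ≠ n`. -/
theorem statement3 [AddCommGroup Γ] (F : Γ →+ Γ) (hF : Function.Injective F)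
    (S : Set Γ) (hSF : S ∩ Set.range F ⊆ {0})
    (a b c : Γ) (ha : a ∈ S) (ha0 : a ≠ 0) (hb : b ∈ S) (hb0 : b ≠ 0)
    (hc : c ∈ S) (hc0 : c ≠ 0) (n m k : ℕ) (hmk : m < k) (hmn : m ≠ n) :
    (⇑F)^[n] a ≠ (⇑F)^[m] b + (⇑F)^[k] c := by
  intro heq
  have hFn : ∀ j : ℕ, Function.Injective ((⇑F)^[j]) := fun j => hF.iterate j
  rcases lt_or_gt_of_ne hmn with hlt | hgt
  · -- m < n : b ∈ range F
    obtain ⟨d, rfl⟩ : ∃ d, n = m + (d + 1) := ⟨n - m - 1, by omega⟩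
    obtain ⟨e, rfl⟩ : ∃ e, k = m + (e + 1) := ⟨k - m - 1, by omega⟩
    have h2 : (⇑F)^[m] ((⇑F)^[d + 1] a) = (⇑F)^[m] (b + (⇑F)^[e + 1] c) := by
      rw [iterate_map_add]
      simpa [Function.iterate_add_apply, add_comm] using heq
    have h3 := hFn m h2
    have hbr : b ∈ Set.range F := by
      refine ⟨(⇑F)^[d] a - (⇑F)^[e] c, ?_⟩
      have : b = (⇑F)^[d + 1] a - (⇑F)^[e + 1] c := by
        rw [h3]; abel
      rw [this]
      simp [Function.iterate_succ_apply', map_sub]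
    exact hb0 (hSF ⟨hb, hbr⟩)
  · -- n < m : a ∈ range F
    obtain ⟨d, rfl⟩ : ∃ d, m = n + (d + 1) := ⟨m - n - 1, by omega⟩
    obtain ⟨e, rfl⟩ : ∃ e, k = n + (e + 1) := ⟨k - n - 1, by omega⟩
    have h2 : (⇑F)^[n] a = (⇑F)^[n] ((⇑F)^[d + 1] b + (⇑F)^[e + 1] c) := by
      rw [iterate_map_add, heq]
      simp [Function.iterate_add_apply, add_comm]
    have h3 := hFn n h2
    have har : a ∈ Set.range F := by
      refine ⟨(⇑F)^[d] b + (⇑F)^[e] c, ?_⟩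
      rw [h3]
      simp [Function.iterate_succ_apply', map_add]
    exact ha0 (hSF ⟨ha, har⟩)
end

section
/- The relation ⪯ on I_F defined by F^i(a) ⪯ F^j(b) iff i ≤ j (for a, b ∈ Σ \ {0}) is a well-defined total preorder on I_F, i.e., it does not depend on the representation of an element of I_F as F^i(a), it is reflexive, transitive, and total. -/
open Function

variable {Γ : Type*}

lemma exp_unique [AddCommGroup Γ] (F : Γ →+ Γ) (hF : Function.Injective F)
    (S : Set Γ) (hSF : S ∩ Set.range F ⊆ {0}) :
    ∀ a ∈ S, a ≠ 0 → ∀ b ∈ S, b ≠ 0 → ∀ i j : ℕ, (⇑F)^[i] a = (⇑F)^[j] b → i = j := by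
  have key : ∀ a ∈ S, a ≠ 0 → ∀ b ∈ S, b ≠ 0 → ∀ i j : ℕ, i ≤ j →
      (⇑F)^[i] a = (⇑F)^[j] b → i = j := by
    intro a ha ha0 b hb hb0 i j hij h
    obtain ⟨k, rfl⟩ := Nat.exists_eq_add_of_le hij
    rw [Function.iterate_add_apply] at h
    have : a = (⇑F)^[k] b := Function.Injective.iterate hF i h
    rcases k with _ | k
    · simp
    · exfalso
      apply ha0
      have : a ∈ S ∩ Set.range F := ⟨ha, ⟨(⇑F)^[k] b, by
        rw [this, Function.iterate_succ_apply']⟩⟩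
      exact hSF this
  intro a ha ha0 b hb hb0 i j h
  rcases le_total i j with hij | hij
  · exact key a ha ha0 b hb hb0 i j hij h
  · exact (key b hb hb0 a ha ha0 j i hij h.symm).symm

/-- The relation `Fⁱ(a) ⪯ Fʲ(b) ↔ i ≤ j` is a well-defined total preorder on `I_F`. -/
theorem statement4 [AddCommGroup Γ] (F : Γ →+ Γ) (hF : Function.Injective F)
    (S : Set Γ) (hS : IsSpanning F S) (hSF : S ∩ Set.range F ⊆ {0}) :
    (∀ a ∈ S, a ≠ 0 → ∀ a' ∈ S, a' ≠ 0 → ∀ b ∈ S, b ≠ 0 → ∀ b' ∈ S, b' ≠ 0 →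
      ∀ i j i' j' : ℕ, (⇑F)^[i] a = (⇑F)^[i'] a' → (⇑F)^[j] b = (⇑F)^[j'] b' →
        (i ≤ j ↔ i' ≤ j')) ∧
    (∀ x ∈ IFset F S, preleq F S x x) ∧
    (∀ x y z : Γ, preleq F S x y → preleq F S y z → preleq F S x z) ∧
    (∀ x ∈ IFset F S, ∀ y ∈ IFset F S, preleq F S x y ∨ preleq F S y x) := by
  have eu := exp_unique F hF S hSF
  refine ⟨?_, ?_, ?_, ?_⟩
  · intro a ha ha0 a' ha' ha'0 b hb hb0 b' hb' hb'0 i j i' j' h1 h2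
    rw [eu a ha ha0 a' ha' ha'0 i i' h1, eu b hb hb0 b' hb' hb'0 j j' h2]
  · rintro x ⟨a, ha, ha0, n, rfl⟩
    exact ⟨a, ha, ha0, a, ha, ha0, n, n, le_rfl, rfl, rfl⟩
  · rintro x y z ⟨a, ha, ha0, b, hb, hb0, i, j, hij, rfl, rfl⟩
      ⟨b', hb', hb'0, c, hc, hc0, j', k, hjk, hy, rfl⟩
    have := eu b hb hb0 b' hb' hb'0 j j' hy
    exact ⟨a, ha, ha0, c, hc, hc0, i, k, by omega, rfl, rfl⟩
  · rintro x ⟨a, ha, ha0, n, rfl⟩ y ⟨b, hb, hb0, m, rfl⟩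
    rcases le_total n m with h | h
    · exact Or.inl ⟨a, ha, ha0, b, hb, hb0, n, m, h, rfl, rfl⟩
    · exact Or.inr ⟨b, hb, hb0, a, ha, ha0, m, n, h, rfl, rfl⟩
end

section
/- The valuation function V_F : Γ \ {0} → I_F, sending g to F^m(b_m) where g = Σ_{i=m}^n F^i(b_i) with b_m ∈ Σ₀ \ {0}, b_i ∈ Σ₀ for m ≤ i ≤ n (the canonical representation from the normal-form lemma), is well-defined: the value F^m(b_m) does not depend on the choice of such a representation. -/
open Function

variable {Γ : Type*}

private lemma sum_Icc_factor' [AddCommGroup Γ] (F : Γ →+ Γ) :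
    ∀ k m : ℕ, ∀ c : ℕ → Γ,
      ∃ t : Γ, ∑ i ∈ Finset.Icc m (m + k), (⇑F)^[i] (c i) = (⇑F)^[m] (c m + F t) := by
  intro k
  induction k with
  | zero => intro m c; exact ⟨0, by simp⟩
  | succ k ih =>
    intro m c
    obtain ⟨t, ht⟩ := ih (m + 1) c
    refine ⟨c (m + 1) + F t, ?_⟩
    have hins : Finset.Icc m (m + (k + 1)) = insert m (Finset.Icc (m + 1) (m + 1 + k)) := by
      ext i; simp; omega
    rw [hins, Finset.sum_insert (by simp), ht, Function.iterate_succ_apply, iterate_map_add]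

private lemma sum_Icc_factor [AddCommGroup Γ] (F : Γ →+ Γ)
    (n m : ℕ) (hm : m ≤ n) (c : ℕ → Γ) :
    ∃ t : Γ, ∑ i ∈ Finset.Icc m n, (⇑F)^[i] (c i) = (⇑F)^[m] (c m + F t) := by
  obtain ⟨k, rfl⟩ : ∃ k, n = m + k := ⟨n - m, by omega⟩
  exact sum_Icc_factor' F k m c

private lemma key_lemma_s5 [AddCommGroup Γ] (F : Γ →+ Γ) (hF : Function.Injective F)
    (S S₀ : Set Γ) (hSF : S ∩ Set.range F ⊆ {0}) (hsub : S₀ ⊆ S)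
    (hrep : ∀ a ∈ S, ∃! a₀, a₀ ∈ S₀ ∧ a - a₀ ∈ Set.range F)
    (m m' : ℕ) (hle : m ≤ m') (x x' : Γ)
    (hx : x ∈ S₀) (hx0 : x ≠ 0) (hx' : x' ∈ S₀) (t t' : Γ)
    (heq : (⇑F)^[m] (x + F t) = (⇑F)^[m'] (x' + F t')) :
    m = m' ∧ x = x' := by
  have hFm : Function.Injective ((⇑F)^[m]) := hF.iterate m
  rcases eq_or_lt_of_le hle with h | h
  · subst h
    refine ⟨rfl, ?_⟩
    have h1 : x + F t = x' + F t' := hFm heq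
    have h2 : x - x' = F (t' - t) := by
      rw [map_sub, eq_comm, sub_eq_sub_iff_add_eq_add, h1]
      exact add_comm _ _
    obtain ⟨a₀, -, huniq⟩ := hrep x (hsub hx)
    have e1 : x = a₀ := huniq x ⟨hx, ⟨0, by simp⟩⟩
    have e2 : x' = a₀ := huniq x' ⟨hx', ⟨t' - t, h2.symm⟩⟩
    rw [e1, e2]
  · exfalso
    obtain ⟨k, hk⟩ : ∃ k, m' = m + (k + 1) := ⟨m' - m - 1, by omega⟩
    subst hk
    rw [Function.iterate_add_apply] at heq
    have h1 : x + F t = (⇑F)^[k + 1] (x' + F t') := hFm heq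
    have h2 : x ∈ Set.range F := by
      refine ⟨(⇑F)^[k] (x' + F t') - t, ?_⟩
      rw [Function.iterate_succ_apply'] at h1
      rw [map_sub, ← h1]
      abel
    exact hx0 (hSF ⟨hsub hx, h2⟩)

/-- Well-definedness of the valuation `V_F`: the lowest term `Fᵐ(b_m)` of a canonical
`Σ₀`-representation of a nonzero `g` does not depend on the representation chosen. -/
theorem statement5 [AddCommGroup Γ] (F : Γ →+ Γ) (hF : Function.Injective F)
    (S S₀ : Set Γ) (hS : IsSpanning F S) (hSF : S ∩ Set.range F ⊆ {0})
    (hsub : S₀ ⊆ S) (h0 : (0 : Γ) ∈ S₀)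
    (hrep : ∀ a ∈ S, ∃! a₀, a₀ ∈ S₀ ∧ a - a₀ ∈ Set.range F)
    (g : Γ) (hg : g ≠ 0) (m n m' n' : ℕ) (b b' : ℕ → Γ)
    (hmn : m ≤ n) (hbm : b m ∈ S₀) (hbm0 : b m ≠ 0)
    (hb : ∀ i, m ≤ i → i ≤ n → b i ∈ S₀)
    (hgb : g = ∑ i ∈ Finset.Icc m n, (⇑F)^[i] (b i))
    (hmn' : m' ≤ n') (hbm' : b' m' ∈ S₀) (hbm0' : b' m' ≠ 0)
    (hb' : ∀ i, m' ≤ i → i ≤ n' → b' i ∈ S₀)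
    (hgb' : g = ∑ i ∈ Finset.Icc m' n', (⇑F)^[i] (b' i)) :
    (⇑F)^[m] (b m) = (⇑F)^[m'] (b' m') := by
  obtain ⟨t, ht⟩ := sum_Icc_factor F n m hmn b
  obtain ⟨t', ht'⟩ := sum_Icc_factor F n' m' hmn' b'
  have heq : (⇑F)^[m] (b m + F t) = (⇑F)^[m'] (b' m' + F t') := by
    rw [← ht, ← ht', ← hgb, ← hgb']
  rcases le_total m m' with hle | hle
  · obtain ⟨he, hx⟩ := key_lemma_s5 F hF S S₀ hSF hsub hrep m m' hle _ _ hbm hbm0 hbm' t t' heq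
    subst he; rw [hx]
  · obtain ⟨he, hx⟩ := key_lemma_s5 F hF S S₀ hSF hsub hrep m' m hle _ _ hbm' hbm0' hbm t' t heq.symm
    subst he; rw [hx]
end

section
/- Let g ∈ Γ and u ∈ I_F, and suppose ε_F(u, g) holds (i.e., u occurs in some F-representation of g). Then there is a unique h ∈ Γ such that R(h, u) holds and u ≺ V_F(g − h). -/
open Function

variable {Γ : Type*}

section Aux

variable [AddCommGroup Γ] {F : Γ →+ Γ} {S S₀ : Set Γ}

lemma iterZero (F : Γ →+ Γ) (k : ℕ) : (⇑F)^[k] (0 : Γ) = 0 :=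
  Function.iterate_fixed (map_zero F) k

lemma iterSum (F : Γ →+ Γ) (k : ℕ) {ι : Type*} (s : Finset ι) (f : ι → Γ) :
    (⇑F)^[k] (∑ i ∈ s, f i) = ∑ i ∈ s, (⇑F)^[k] (f i) := by
  induction k with
  | zero => simp
  | succ k ih => simp [Function.iterate_succ_apply', ih, map_sum]

lemma iterSub (F : Γ →+ Γ) (k : ℕ) (x y : Γ) :
    (⇑F)^[k] (x - y) = (⇑F)^[k] x - (⇑F)^[k] y := by
  induction k with
  | zero => simp
  | succ k ih => simp [Function.iterate_succ_apply', ih, map_sub]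

lemma uniq_idx_le (hSF : S ∩ Set.range F ⊆ {0}) (hF : Function.Injective F)
    {a b : Γ} (ha : a ∈ S) (ha0 : a ≠ 0)
    {i j : ℕ} (hij : i ≤ j) (h : (⇑F)^[i] a = (⇑F)^[j] b) : i = j ∧ a = b := by
  have hj : j = i + (j - i) := by omega
  rw [hj, Function.iterate_add_apply] at h
  have hab : a = (⇑F)^[j - i] b := hF.iterate i h
  rcases Nat.eq_zero_or_pos (j - i) with h0 | hpos
  · rw [h0] at hab
    exact ⟨by omega, hab⟩
  · exfalso
    obtain ⟨t, ht⟩ : ∃ t, j - i = t + 1 := ⟨j - i - 1, by omega⟩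
    rw [ht, Function.iterate_succ_apply'] at hab
    exact ha0 (hSF ⟨ha, ⟨(⇑F)^[t] b, hab.symm⟩⟩)

lemma uniq_idx (hSF : S ∩ Set.range F ⊆ {0}) (hF : Function.Injective F)
    {a b : Γ} (ha : a ∈ S) (ha0 : a ≠ 0) (hb : b ∈ S) (hb0 : b ≠ 0)
    {i j : ℕ} (h : (⇑F)^[i] a = (⇑F)^[j] b) : i = j ∧ a = b := by
  rcases le_total i j with hij | hij
  · exact uniq_idx_le hSF hF ha ha0 hij h
  · obtain ⟨h1, h2⟩ := uniq_idx_le hSF hF hb hb0 hij h.symm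
    exact ⟨h1.symm, h2.symm⟩

lemma carry (hF : Function.Injective F) (hS : IsSpanning F S)
    (hSF : S ∩ Set.range F ⊆ {0}) :
    ∀ (k : ℕ) (d : ℕ → Γ) (s z : Γ), s ∈ S →
      (∀ i < k, ∃ x ∈ S, ∃ y ∈ S, d i = x + y) →
      s + ∑ i ∈ Finset.range k, (⇑F)^[i] (d i) = (⇑F)^[k+1] z →
      s + ∑ i ∈ Finset.range k, (⇑F)^[i] (d i) = 0 := by
  intro k
  induction k with
  | zero =>
    intro d s z hs _ heq
    simp only [Finset.range_zero, Finset.sum_empty, add_zero] at heq ⊢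
    have : s ∈ ({0} : Set Γ) := hSF ⟨hs, ⟨(⇑F)^[0] z, by simpa using heq.symm⟩⟩
    exact this
  | succ k ih =>
    intro d s z hs hd heq
    obtain ⟨x, hx, y, hy, hd0⟩ := hd 0 (Nat.succ_pos k)
    set T : Γ := ∑ i ∈ Finset.range k, (⇑F)^[i] (d (i + 1)) with hT
    have hsplit : ∑ i ∈ Finset.range (k + 1), (⇑F)^[i] (d i) = d 0 + F T := by
      have e1 : ∑ i ∈ Finset.range k, (⇑F)^[i+1] (d (i+1)) = F T := by
        rw [hT, map_sum]
        exact Finset.sum_congr rfl fun i _ => Function.iterate_succ_apply' F i _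
      rw [Finset.sum_range_succ', e1, Function.iterate_zero_apply, add_comm]
    obtain ⟨b, hb, c, hc, hbc⟩ := hS.C2 s hs x hx y hy
    have heq' : b + F c + F T = (⇑F)^[k + 1 + 1] z := by
      rw [← hbc]
      rw [hsplit, hd0] at heq
      rw [← heq]; abel
    have hb0 : b = 0 := by
      have : b = F ((⇑F)^[k + 1] z - c - T) := by
        rw [map_sub, map_sub]
        rw [← Function.iterate_succ_apply' F (k + 1) z]
        rw [← heq']; abel
      exact hSF ⟨hb, ⟨_, this.symm⟩⟩
    have hcT : c + T = (⇑F)^[k + 1] z := by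
      apply hF
      rw [map_add]
      rw [← Function.iterate_succ_apply' F (k + 1) z, ← heq', hb0]
      abel
    have hcT0 : c + T = 0 := by
      have := ih (fun i => d (i + 1)) c z hc
        (fun i hi => hd (i + 1) (by omega)) hcT
      exact this
    rw [hsplit, hd0]
    have : s + (x + y + F T) = s + x + y + F T := by abel
    rw [this, hbc, hb0, zero_add, ← map_add, hcT0, map_zero]

end Aux

/-- If `ε_F(u, g)` holds then there is a unique `h ∈ Γ` with `R(h, u)` and
`u ≺ V_F(g − h)`. -/
theorem statement7 [AddCommGroup Γ] (F : Γ →+ Γ) (hF : Function.Injective F)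
    (S S₀ : Set Γ) (hS : IsSpanning F S) (hSF : S ∩ Set.range F ⊆ {0})
    (hsub : S₀ ⊆ S) (h0 : (0 : Γ) ∈ S₀)
    (hrep : ∀ a ∈ S, ∃! a₀, a₀ ∈ S₀ ∧ a - a₀ ∈ Set.range F)
    (g u : Γ) (hu : u ∈ IFset F S) (he : epsF F S S₀ u g) :
    ∃! h : Γ, Rrel F S h u ∧ ltVF F S S₀ u (g - h) := by
  obtain ⟨a, haS, ha0, n, hun⟩ := hu
  -- uniqueness part
  have key : ∀ h₁ h₂ : Γ, (Rrel F S h₁ u ∧ ltVF F S S₀ u (g - h₁)) →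
      (Rrel F S h₂ u ∧ ltVF F S S₀ u (g - h₂)) → h₁ = h₂ := by
    intro h₁ h₂ ⟨R1, L1⟩ ⟨R2, L2⟩
    obtain ⟨a₁, ha1, ha10, n₁, hu1, m₁, hm1, c₁, hc1S, hc1m, hc1n, hsum1⟩ := R1
    obtain ⟨a₂, ha2, ha20, n₂, hu2, m₂, hm2, c₂, hc2S, hc2m, hc2n, hsum2⟩ := R2
    obtain ⟨hn1, haa1⟩ := uniq_idx hSF hF ha1 ha10 ha2 ha20 (hu1.symm.trans hu2)
    rw [hn1] at hm1 hc1S hc1n hsum1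
    rw [haa1] at hc1n
    -- g - h_j lies in the image of F^[n₂+1]
    have fac : ∀ h' : Γ, ltVF F S S₀ u (g - h') → ∃ w, g - h' = (⇑F)^[n₂+1] w := by
      intro h' hlt
      rcases hlt with h0 | ⟨k, m, hkm, ⟨a', ha', ha'0, hua'⟩, n', hmn', b, _, _, _, hgh⟩
      · exact ⟨0, by rw [h0, iterZero]⟩
      · have hk : k = n₂ := (uniq_idx hSF hF ha' ha'0 ha2 ha20 (hua'.symm.trans hu2)).1
        refine ⟨∑ i ∈ Finset.Icc m n', (⇑F)^[i - (n₂+1)] (b i), ?_⟩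
        rw [hgh, iterSum]
        refine Finset.sum_congr rfl fun i hi => ?_
        rw [← Function.iterate_add_apply]
        congr 1
        have := (Finset.mem_Icc.1 hi).1
        omega
    obtain ⟨w₁, hw1⟩ := fac h₁ L1
    obtain ⟨w₂, hw2⟩ := fac h₂ L2
    -- extend words by zeros
    have hs : ∀ (m : ℕ) (c : ℕ → Γ), m ≤ n₂ →
        ∑ i ∈ Finset.Icc m n₂, (⇑F)^[i] (c i)
          = ∑ i ∈ Finset.range (n₂+1), (⇑F)^[i] (if m ≤ i then c i else 0) := by
      intro m c hm
      have e1 : ∑ i ∈ Finset.Icc m n₂, (⇑F)^[i] (c i)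
          = ∑ i ∈ Finset.Icc m n₂, (⇑F)^[i] (if m ≤ i then c i else 0) :=
        Finset.sum_congr rfl fun i hi => by rw [if_pos (Finset.mem_Icc.1 hi).1]
      rw [e1]
      refine Finset.sum_subset (fun i hi => Finset.mem_range.2 ?_) (fun i hi hni => ?_)
      · have := Finset.mem_Icc.1 hi; omega
      · have hir := Finset.mem_range.1 hi
        have hmi : ¬ m ≤ i := fun h => hni (Finset.mem_Icc.2 ⟨h, by omega⟩)
        rw [if_neg hmi, iterZero]
    set c₁' : ℕ → Γ := fun i => if m₁ ≤ i then c₁ i else 0 with hc1'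
    set c₂' : ℕ → Γ := fun i => if m₂ ≤ i then c₂ i else 0 with hc2'
    have hs1 : h₁ = ∑ i ∈ Finset.range (n₂+1), (⇑F)^[i] (c₁' i) := by
      rw [hsum1]; exact hs m₁ c₁ hm1
    have hs2 : h₂ = ∑ i ∈ Finset.range (n₂+1), (⇑F)^[i] (c₂' i) := by
      rw [hsum2]; exact hs m₂ c₂ hm2
    have hdiff : h₂ - h₁ = ∑ i ∈ Finset.range (n₂+1), (⇑F)^[i] (c₂' i - c₁' i) := by
      rw [hs1, hs2, ← Finset.sum_sub_distrib]
      exact Finset.sum_congr rfl fun i _ => (iterSub F i _ _).symm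
    have hdn : c₂' n₂ - c₁' n₂ = 0 := by
      simp only [hc1', hc2']
      rw [if_pos hm1, if_pos hm2, hc1n, hc2n, sub_self]
    have hdiff' : h₂ - h₁ = ∑ i ∈ Finset.range n₂, (⇑F)^[i] (c₂' i - c₁' i) := by
      rw [hdiff, Finset.sum_range_succ, hdn, iterZero, add_zero]
    have hmem : ∀ (m : ℕ) (c : ℕ → Γ), (∀ i, m ≤ i → i ≤ n₂ → c i ∈ S) →
        ∀ i, i ≤ n₂ → (if m ≤ i then c i else 0) ∈ S := by
      intro m c hcS i hi
      by_cases h : m ≤ i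
      · rw [if_pos h]; exact hcS i h hi
      · rw [if_neg h]; exact hS.zero_mem
    have hz : 0 + ∑ i ∈ Finset.range n₂, (⇑F)^[i] (c₂' i - c₁' i) = (⇑F)^[n₂+1] (w₁ - w₂) := by
      rw [zero_add, ← hdiff', iterSub]
      rw [← hw1, ← hw2]; abel
    have final := carry hF hS hSF n₂ (fun i => c₂' i - c₁' i) 0 (w₁ - w₂) hS.zero_mem
      (fun i hi => ⟨c₂' i, hmem m₂ c₂ hc2S i (by omega), -(c₁' i),
        hS.neg_mem _ (hmem m₁ c₁ hc1S i (by omega)), sub_eq_add_neg _ _⟩) hz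
    have : h₂ - h₁ = 0 := by
      rw [hdiff', ← zero_add (∑ i ∈ Finset.range n₂, (⇑F)^[i] (c₂' i - c₁' i)), final]
    exact (sub_eq_zero.1 this).symm
  -- existence part
  have Rself : Rrel F S u u := by
    refine ⟨a, haS, ha0, n, hun, n, le_rfl, fun _ => a, fun _ _ _ => haS, ha0, rfl, ?_⟩
    rw [Finset.Icc_self, Finset.sum_singleton, hun]
  obtain ⟨-, hcase⟩ := he
  rcases hcase with hg | ⟨h, hh⟩
  · have hprop : Rrel F S u u ∧ ltVF F S S₀ u (g - u) :=
      ⟨Rself, Or.inl (by rw [hg, sub_self])⟩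
    exact ⟨u, hprop, fun y hy => key y u hy hprop⟩
  · exact ⟨h, hh, fun y hy => key y h hy hh⟩
end

section
/- The equivalence relation E on pairs of words over an F-spanning set Σ, defined by E(σ, τ) iff [σ]_F = [τ]_F, is recognized by a finite automaton (reading the convolution σ ⋆ τ); consequently, if L ⊆ Σ* is regular then [L]_F ⊆ Γ is F-automatic. -/
open Function

variable {Γ : Type*}

/-- The value `[σ]_F` of a word over the alphabet `Σ` (viewed as a subtype of `Γ`). -/
def wordVal [AddCommGroup Γ] (F : Γ →+ Γ) (S : Set Γ) (σ : List {x : Γ // x ∈ S}) : Γ :=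
  evalF F (σ.map Subtype.val)

/-- `A ⊆ Γ` is `F`-automatic w.r.t. the spanning set `Σ`: the language of words
representing elements of `A` is regular. -/
def FAutomatic [AddCommGroup Γ] (F : Γ →+ Γ) (S : Set Γ) (A : Set Γ) : Prop :=
  Language.IsRegular ({σ : List {x : Γ // x ∈ S} | wordVal F S σ ∈ A} : Language {x : Γ // x ∈ S})

/-- Convolution of two words, padding the shorter one with the symbol `♯ = none`. -/
def conv {α : Type*} : List α → List α → List (Option α × Option α)
  | [], [] => []
  | a :: s, [] => (some a, none) :: conv s []
  | [], b :: t => (none, some b) :: conv [] t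
  | a :: s, b :: t => (some a, some b) :: conv s t

section Automaton

open scoped Pointwise

variable [AddCommGroup Γ]

/-- Value in `Γ` of an optional letter (`♯ = none` counts as `0`). -/
def oval (S : Set Γ) : Option {x : Γ // x ∈ S} → Γ
  | none => 0
  | some a => a.1

lemma oval_mem {S : Set Γ} (h0 : (0 : Γ) ∈ S) (o : Option {x : Γ // x ∈ S}) :
    oval S o ∈ S := by
  cases o with
  | none => exact h0
  | some a => exact a.2

/-- Closure of `S + S` under the carry operation. -/
lemma carry_mem {F : Γ →+ Γ} {S : Set Γ} (hS : IsSpanning F S) {g a b g' : Γ}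
    (hg : g ∈ S + S) (ha : a ∈ S) (hb : b ∈ S) (h : F g' = g - a + b) : g' ∈ S + S := by
  obtain ⟨s1, hs1, s2, hs2, rfl⟩ := Set.mem_add.mp hg
  obtain ⟨c, hc, d, hd, hcd⟩ := hS.C2 s1 hs1 s2 hs2 b hb
  have key : c + (-a) = F (g' - d) := by
    have h2 : s1 + s2 - a + b = c + F d - a := by rw [← hcd]; abel
    rw [map_sub, h, h2]; abel
  have hmem : g' - d ∈ S := hS.C3 c hc (-a) (hS.neg_mem a ha) (g' - d) key
  exact Set.mem_add.mpr ⟨g' - d, hmem, d, hd, by abel⟩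

/-- State space of the equality automaton. -/
abbrev QE (S : Set Γ) : Type _ := Option {g : Γ // g ∈ S + S}

open Classical in
/-- The DFA recognizing `[σ]_F = [τ]_F` on convolutions. -/
noncomputable def ME (F : Γ →+ Γ) (S : Set Γ) (h0 : (0 : Γ) ∈ S) :
    DFA (Option {x : Γ // x ∈ S} × Option {x : Γ // x ∈ S}) (QE S) where
  step q l :=
    match q with
    | none => none
    | some g =>
      if h : ∃ g' ∈ S + S, F g' = g.1 - oval S l.1 + oval S l.2 then
        some ⟨h.choose, h.choose_spec.1⟩
      else none
  start := some ⟨0, Set.mem_add.mpr ⟨0, h0, 0, h0, add_zero 0⟩⟩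
  accept := {q | ∃ hq : (0 : Γ) ∈ S + S, q = some ⟨0, hq⟩}

variable (F : Γ →+ Γ) (S : Set Γ)

lemma ME_dead (h0 : (0 : Γ) ∈ S) (l : List (Option {x : Γ // x ∈ S} × Option {x : Γ // x ∈ S})) :
    (ME F S h0).evalFrom none l = none := by
  induction l with
  | nil => rfl
  | cons a l ih => exact ih

lemma ME_step_accept (h0 : (0 : Γ) ∈ S) (hF : Function.Injective F) {g : Γ} (hg : g ∈ S + S)
    (l : Option {x : Γ // x ∈ S} × Option {x : Γ // x ∈ S})
    (rest : List (Option {x : Γ // x ∈ S} × Option {x : Γ // x ∈ S})) :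
    (ME F S h0).evalFrom (some ⟨g, hg⟩) (l :: rest) ∈ (ME F S h0).accept ↔
      ∃ g', ∃ hg' : g' ∈ S + S, F g' = g - oval S l.1 + oval S l.2 ∧
        (ME F S h0).evalFrom (some ⟨g', hg'⟩) rest ∈ (ME F S h0).accept := by
  show (ME F S h0).evalFrom ((ME F S h0).step (some ⟨g, hg⟩) l) rest ∈ _ ↔ _
  by_cases h : ∃ g' ∈ S + S, F g' = g - oval S l.1 + oval S l.2
  · have hstep : (ME F S h0).step (some ⟨g, hg⟩) l = some ⟨h.choose, h.choose_spec.1⟩ := by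
      simp only [ME, dif_pos h]
    rw [hstep]
    constructor
    · intro hacc
      exact ⟨h.choose, h.choose_spec.1, h.choose_spec.2, hacc⟩
    · rintro ⟨g', hg', heq, hacc⟩
      have : g' = h.choose := hF (by rw [heq, h.choose_spec.2])
      subst this
      exact hacc
  · have hstep : (ME F S h0).step (some ⟨g, hg⟩) l = none := by
      simp only [ME, dif_neg h]
    rw [hstep, ME_dead]
    constructor
    · rintro ⟨hq, h'⟩
      exact absurd h' (by simp)
    · rintro ⟨g', hg', heq, -⟩
      exact absurd ⟨g', hg', heq⟩ h

lemma me_exists_iff (hS : IsSpanning F S) {g X Y : Γ} (hg : g ∈ S + S)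
    (o1 o2 : Option {x : Γ // x ∈ S}) :
    (∃ g', ∃ _ : g' ∈ S + S, F g' = g - oval S o1 + oval S o2 ∧ g' + X = Y) ↔
      g + (oval S o2 + F X) = oval S o1 + F Y := by
  constructor
  · rintro ⟨g', hg', heq, rfl⟩
    rw [map_add, heq]; abel
  · intro H
    have key : F (Y - X) = g - oval S o1 + oval S o2 := by
      have h' : F Y = g + (oval S o2 + F X) - oval S o1 := by rw [H]; abel
      rw [map_sub, h']; abel
    exact ⟨Y - X, carry_mem hS hg (oval_mem hS.zero_mem o1) (oval_mem hS.zero_mem o2) key,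
      key, by abel⟩

lemma wordVal_cons (a : {x : Γ // x ∈ S}) (s : List {x : Γ // x ∈ S}) :
    wordVal F S (a :: s) = a.1 + F (wordVal F S s) := rfl

lemma wordVal_nil : wordVal F S [] = 0 := rfl

lemma ME_eval (hF : Function.Injective F) (hS : IsSpanning F S)
    (σ : List {x : Γ // x ∈ S}) :
    ∀ (τ : List {x : Γ // x ∈ S}) {g : Γ} (hg : g ∈ S + S),
      ((ME F S hS.zero_mem).evalFrom (some ⟨g, hg⟩) (conv σ τ) ∈ (ME F S hS.zero_mem).accept ↔
        g + wordVal F S τ = wordVal F S σ) := by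
  induction σ with
  | nil =>
    intro τ
    induction τ with
    | nil =>
      intro g hg
      simp only [conv]
      show some ⟨g, hg⟩ ∈ (ME F S hS.zero_mem).accept ↔ _
      constructor
      · rintro ⟨hq, h⟩
        simp only [Option.some.injEq, Subtype.mk.injEq] at h
        simp [h, wordVal_nil]
      · intro h
        simp only [wordVal_nil, add_zero] at h
        exact ⟨h ▸ hg, by simp [h]⟩
    | cons b t iht =>
      intro g hg
      simp only [conv]
      rw [ME_step_accept F S hS.zero_mem hF hg]
      simp only [iht]
      rw [me_exists_iff F S hS hg none (some b)]
      simp [oval, wordVal_cons, wordVal_nil]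
  | cons a s ihs =>
    intro τ
    cases τ with
    | nil =>
      intro g hg
      simp only [conv]
      rw [ME_step_accept F S hS.zero_mem hF hg]
      simp only [ihs]
      rw [me_exists_iff F S hS hg (some a) none]
      simp [oval, wordVal_cons, wordVal_nil]
    | cons b t =>
      intro g hg
      simp only [conv]
      rw [ME_step_accept F S hS.zero_mem hF hg]
      simp only [ihs]
      rw [me_exists_iff F S hS hg (some a) (some b)]
      simp [oval, wordVal_cons]

lemma ME_accepts_iff (hF : Function.Injective F) (hS : IsSpanning F S)
    (σ τ : List {x : Γ // x ∈ S}) :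
    conv σ τ ∈ (ME F S hS.zero_mem).accepts ↔ wordVal F S σ = wordVal F S τ := by
  rw [DFA.mem_accepts]
  show (ME F S hS.zero_mem).evalFrom (some ⟨0, _⟩) (conv σ τ) ∈ _ ↔ _
  rw [ME_eval F S hF hS σ τ]
  rw [zero_add, eq_comm]

end Automaton

section Projection

variable {A : Type*}

lemma conv_nil_right : ∀ l : List A, conv l [] = l.map (fun a => (some a, none)) := by
  intro l
  induction l with
  | nil => simp [conv]
  | cons a s ih => simp [conv, ih]

lemma conv_nil_left : ∀ l : List A, conv [] l = l.map (fun b => (none, some b)) := by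
  intro l
  induction l with
  | nil => simp [conv]
  | cons a s ih => simp [conv, ih]

lemma conv_append : ∀ (x τ : List A), x.length = τ.length → ∀ t : List A,
    conv x (τ ++ t) = conv x τ ++ t.map (fun b => (none, some b)) := by
  intro x
  induction x with
  | nil =>
    intro τ hτ t
    rw [List.length_nil, eq_comm, List.length_eq_zero_iff] at hτ
    subst hτ
    simp [conv, conv_nil_left]
  | cons a s ih =>
    intro τ hτ t
    cases τ with
    | nil => simp at hτ
    | cons b τ' =>
      simp only [List.length_cons, Nat.succ.injEq] at hτ
      simp [conv, ih τ' hτ t]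

lemma nfa_mem_evalFrom {Q : Type*} (N : NFA A Q) (x : List A) :
    ∀ (SS : Set Q) (r : Q), r ∈ N.evalFrom SS x ↔ ∃ s ∈ SS, r ∈ N.evalFrom {s} x := by
  induction x with
  | nil => simp [NFA.evalFrom_nil]
  | cons a l ih =>
    intro SS r
    show r ∈ N.evalFrom (N.stepSet SS a) l ↔ _
    rw [ih]
    constructor
    · rintro ⟨y, hy, hr⟩
      rw [NFA.mem_stepSet] at hy
      obtain ⟨x0, hx0, hyx⟩ := hy
      refine ⟨x0, hx0, ?_⟩
      show r ∈ N.evalFrom (N.stepSet {x0} a) l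
      rw [ih]
      exact ⟨y, by rw [NFA.mem_stepSet]; exact ⟨x0, rfl, hyx⟩, hr⟩
    · rintro ⟨x0, hx0, hr⟩
      replace hr : r ∈ N.evalFrom (N.stepSet {x0} a) l := hr
      rw [ih] at hr
      obtain ⟨y, hy, hr⟩ := hr
      rw [NFA.mem_stepSet] at hy
      obtain ⟨x1, hx1, hyx⟩ := hy
      rw [Set.mem_singleton_iff] at hx1
      exact ⟨y, by rw [NFA.mem_stepSet]; exact ⟨x0, hx0, hx1 ▸ hyx⟩, hr⟩

end Projection

section NEdef

open scoped Pointwise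

variable [AddCommGroup Γ] (F : Γ →+ Γ) (S : Set Γ) (h0 : (0 : Γ) ∈ S)
variable {QL : Type} (ML : DFA {x : Γ // x ∈ S} QL)

/-- The NFA recognizing `{σ | ∃ τ ∈ L, [σ]_F = [τ]_F}`, guessing `τ` letter by letter. -/
noncomputable def NE : NFA {x : Γ // x ∈ S} (QE S × QL × Bool) where
  step r a :=
    {r' | (r.2.2 = true ∧ ∃ b, r' = ((ME F S h0).step r.1 (some a, some b), ML.step r.2.1 b, true))
      ∨ r' = ((ME F S h0).step r.1 (some a, none), r.2.1, false)}
  start := {((ME F S h0).start, ML.start, true)}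
  accept := {r | ∃ t : List {x : Γ // x ∈ S}, (r.2.2 = true ∨ t = []) ∧
      (ME F S h0).evalFrom r.1 (t.map fun b => (none, some b)) ∈ (ME F S h0).accept ∧
      ML.evalFrom r.2.1 t ∈ ML.accept}

lemma NE_eval_false (x : List {x : Γ // x ∈ S}) :
    ∀ (q : QE S) (p : QL), (NE F S h0 ML).evalFrom {(q, p, false)} x =
      {((ME F S h0).evalFrom q (x.map fun a => (some a, none)), p, false)} := by
  induction x with
  | nil => intro q p; simp [NFA.evalFrom_nil]
  | cons a l ih =>
    intro q p
    show (NE F S h0 ML).evalFrom ((NE F S h0 ML).stepSet {(q, p, false)} a) l = _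
    have hstep : (NE F S h0 ML).stepSet {(q, p, false)} a =
        {((ME F S h0).step q (some a, none), p, false)} := by
      ext r
      simp [NFA.stepSet, NE]
    rw [hstep, ih]
    rfl

lemma NE_eval_true (x : List {x : Γ // x ∈ S}) :
    ∀ (q : QE S) (p : QL) (r : QE S × QL × Bool),
      r ∈ (NE F S h0 ML).evalFrom {(q, p, true)} x ↔
      ((∃ τ, τ.length = x.length ∧
          r = ((ME F S h0).evalFrom q (conv x τ), ML.evalFrom p τ, true)) ∨
        (∃ τ, τ.length < x.length ∧
          r = ((ME F S h0).evalFrom q (conv x τ), ML.evalFrom p τ, false))) := by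
  induction x with
  | nil =>
    intro q p r
    rw [NFA.evalFrom_nil]
    constructor
    · rintro rfl
      exact Or.inl ⟨[], rfl, by simp only [conv, DFA.evalFrom_nil]⟩
    · rintro (⟨τ, hlen, rfl⟩ | ⟨τ, hlen, rfl⟩)
      · rw [List.length_nil, List.length_eq_zero_iff] at hlen
        subst hlen
        simp [conv]
      · exact absurd hlen (by simp)
  | cons a l ih =>
    intro q p r
    show r ∈ (NE F S h0 ML).evalFrom ((NE F S h0 ML).stepSet {(q, p, true)} a) l ↔ _
    rw [nfa_mem_evalFrom]
    have hstep : (NE F S h0 ML).stepSet {(q, p, true)} a = (NE F S h0 ML).step (q, p, true) a := by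
      ext r'; simp [NFA.stepSet]
    rw [hstep]
    constructor
    · rintro ⟨s0, hs0, hr⟩
      simp only [NE, Set.mem_setOf_eq, true_and] at hs0
      rcases hs0 with ⟨b, rfl⟩ | rfl
      · rw [ih] at hr
        rcases hr with ⟨τ', hlen, rfl⟩ | ⟨τ', hlen, rfl⟩
        · exact Or.inl ⟨b :: τ', by simp [hlen], by simp only [conv]; rfl⟩
        · exact Or.inr ⟨b :: τ', by simpa using Nat.succ_lt_succ hlen, by simp only [conv]; rfl⟩
      · rw [NE_eval_false] at hr
        rw [Set.mem_singleton_iff] at hr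
        subst hr
        refine Or.inr ⟨[], by simp, ?_⟩
        simp only [conv_nil_right, conv]
        rfl
    · rintro (⟨τ, hlen, rfl⟩ | ⟨τ, hlen, rfl⟩)
      · cases τ with
        | nil => simp at hlen
        | cons b τ' =>
          simp only [List.length_cons, Nat.succ.injEq] at hlen
          refine ⟨((ME F S h0).step q (some a, some b), ML.step p b, true), ?_, ?_⟩
          · simp only [NE, Set.mem_setOf_eq, true_and]
            exact Or.inl ⟨b, rfl⟩
          · rw [ih]
            exact Or.inl ⟨τ', hlen, by simp only [conv]; rfl⟩
      · cases τ with
        | nil =>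
          refine ⟨((ME F S h0).step q (some a, none), p, false), ?_, ?_⟩
          · simp only [NE, Set.mem_setOf_eq, true_and]
            exact Or.inr trivial
          · rw [NE_eval_false, Set.mem_singleton_iff]
            simp only [conv_nil_right, conv]
            rfl
        | cons b τ' =>
          simp only [List.length_cons] at hlen
          refine ⟨((ME F S h0).step q (some a, some b), ML.step p b, true), ?_, ?_⟩
          · simp only [NE, Set.mem_setOf_eq, true_and]
            exact Or.inl ⟨b, rfl⟩
          · rw [ih]
            exact Or.inr ⟨τ', Nat.lt_of_succ_lt_succ hlen, by simp only [conv]; rfl⟩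

lemma NE_accepts (x : List {x : Γ // x ∈ S}) :
    x ∈ (NE F S h0 ML).accepts ↔
      ∃ τ, conv x τ ∈ (ME F S h0).accepts ∧ τ ∈ ML.accepts := by
  rw [NFA.mem_accepts]
  constructor
  · rintro ⟨r, hr, hre⟩
    have hstart : (NE F S h0 ML).start = {((ME F S h0).start, ML.start, true)} := rfl
    rw [hstart, NE_eval_true] at hre
    rcases hre with ⟨τ, hlen, rfl⟩ | ⟨τ, hlen, rfl⟩
    · obtain ⟨t, -, hE, hL⟩ := hr
      refine ⟨τ ++ t, ?_, ?_⟩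
      · rw [DFA.mem_accepts]
        show (ME F S h0).evalFrom (ME F S h0).start (conv x (τ ++ t)) ∈ _
        rw [conv_append x τ hlen.symm t, DFA.evalFrom_of_append]
        exact hE
      · rw [DFA.mem_accepts]
        show ML.evalFrom ML.start (τ ++ t) ∈ _
        rw [DFA.evalFrom_of_append]
        exact hL
    · obtain ⟨t, ht, hE, hL⟩ := hr
      rcases ht with ht | rfl
      · exact absurd ht (by simp)
      · simp only [List.map_nil, DFA.evalFrom_nil] at hE hL
        exact ⟨τ, hE, hL⟩
  · rintro ⟨τ, hτE, hτL⟩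
    by_cases hlen : x.length ≤ τ.length
    · refine ⟨((ME F S h0).evalFrom (ME F S h0).start (conv x (τ.take x.length)),
        ML.evalFrom ML.start (τ.take x.length), true), ?_, ?_⟩
      · refine ⟨τ.drop x.length, Or.inl rfl, ?_, ?_⟩
        · rw [← DFA.evalFrom_of_append,
            ← conv_append x (τ.take x.length) (by simp [hlen]) (τ.drop x.length),
            List.take_append_drop]
          exact hτE
        · rw [← DFA.evalFrom_of_append, List.take_append_drop]
          exact hτL
      · have hstart : (NE F S h0 ML).start = {((ME F S h0).start, ML.start, true)} := rfl
        rw [hstart, NE_eval_true]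
        exact Or.inl ⟨τ.take x.length, by simp [hlen], rfl⟩
    · push_neg at hlen
      refine ⟨((ME F S h0).evalFrom (ME F S h0).start (conv x τ),
        ML.evalFrom ML.start τ, false), ⟨[], Or.inr rfl, by simp only [List.map_nil, DFA.evalFrom_nil]; exact hτE,
          by simp only [DFA.evalFrom_nil]; exact hτL⟩, ?_⟩
      have hstart : (NE F S h0 ML).start = {((ME F S h0).start, ML.start, true)} := rfl
      rw [hstart, NE_eval_true]
      exact Or.inr ⟨τ, hlen, rfl⟩

end NEdef

open scoped Pointwise

/-- The equivalence relation `E(σ, τ) ↔ [σ]_F = [τ]_F` is recognized by a finite automaton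
reading the convolution `σ ⋆ τ`; consequently `[L]_F` is `F`-automatic for regular `L`. -/
theorem statement19 [AddCommGroup Γ] (F : Γ →+ Γ) (hF : Function.Injective F)
    (S : Set Γ) (hS : IsSpanning F S) :
    (∃ E : Language (Option {x : Γ // x ∈ S} × Option {x : Γ // x ∈ S}), E.IsRegular ∧
      ∀ σ τ : List {x : Γ // x ∈ S}, conv σ τ ∈ E ↔ wordVal F S σ = wordVal F S τ) ∧
    ∀ L : Language {x : Γ // x ∈ S}, L.IsRegular → FAutomatic F S (wordVal F S '' L) := by
  classical
  have h0 := hS.zero_mem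
  have finSS : (S + S).Finite := hS.finite.add hS.finite
  haveI : Fintype {g : Γ // g ∈ S + S} := finSS.fintype
  haveI : Fintype (QE S) := instFintypeOption
  constructor
  · refine ⟨(ME F S hS.zero_mem).accepts, ⟨Fin (Fintype.card (QE S)), inferInstance,
      DFA.reindex (Fintype.equivFin (QE S)) (ME F S hS.zero_mem), by simp⟩, ?_⟩
    intro σ τ
    exact ME_accepts_iff F S hF hS σ τ
  · intro L hL
    obtain ⟨QL, fQL, ML, hML⟩ := hL
    haveI := fQL
    haveI : Fintype (Set (QE S × QL × Bool)) := Fintype.ofFinite _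
    refine ⟨Fin (Fintype.card (Set (QE S × QL × Bool))), inferInstance,
      DFA.reindex (Fintype.equivFin _) (NE F S hS.zero_mem ML).toDFA, ?_⟩
    rw [DFA.accepts_reindex, NFA.toDFA_correct]
    ext x
    rw [NE_accepts]
    constructor
    · rintro ⟨τ, hE, hL'⟩
      have hval := (ME_accepts_iff F S hF hS x τ).mp hE
      exact ⟨τ, hML ▸ hL', hval.symm⟩
    · rintro ⟨τ, hτL, hval⟩
      exact ⟨τ, (ME_accepts_iff F S hF hS x τ).mpr hval.symm, hML ▸ hτL⟩
end
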